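/- Let Γ be a residually finite group and let γ₁,…,γ_h ∈ Γ be elements of finite orders m₁,…,m_h respectively. Then there exists a normal subgroup Λ of Γ of finite index such that for each i the image of γᵢ in the quotient group Γ/Λ has order exactly mᵢ. -/
import Mathlib


/-- If `Γ` is residually finite and `γ₁,…,γ_h ∈ Γ` have finite orders `m₁,…,m_h`, then
there is a finite-index normal subgroup `Λ ⊴ Γ` such that the image of each `γᵢ` in
the quotient group `Γ ⧸ Λ` has order exactly `mᵢ`. -/
theorem stmt11 (Γ : Type*) [Group Γ]
    (hres : ∀ γ : Γ, γ ≠ 1 →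
      ∃ (G : Type) (_ : Group G) (_ : Finite G), ∃ φ : Γ →* G, φ γ ≠ 1)
    (h : ℕ) (γ : Fin h → Γ) (m : Fin h → ℕ)
    (hm : ∀ i, 1 ≤ m i) (hord : ∀ i, orderOf (γ i) = m i) :
    ∃ (Λ : Subgroup Γ) (hN : Λ.Normal),
      Λ.FiniteIndex ∧
        (haveI := hN; ∀ i, orderOf ((QuotientGroup.mk (γ i) : Γ ⧸ Λ)) = m i) := by
  classical
  have key : ∀ (i : Fin h) (k : Fin (m i)),
      ∃ H : Subgroup Γ, H.Normal ∧ H.FiniteIndex ∧ ((k : ℕ) ≠ 0 → γ i ^ (k : ℕ) ∉ H) := by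
    intro i k
    by_cases hk : (k : ℕ) = 0
    · exact ⟨⊤, inferInstance, inferInstance, fun h' => absurd hk h'⟩
    · have hne : γ i ^ (k : ℕ) ≠ 1 := by
        apply pow_ne_one_of_lt_orderOf hk
        rw [hord i]; exact k.2
      obtain ⟨G, _, _, φ, hφ⟩ := hres _ hne
      refine ⟨φ.ker, inferInstance, ?_, fun _ hmem => hφ ?_⟩
      · haveI : Finite φ.range := Subtype.finite
        infer_instance
      · exact hmem
  choose H hNorm hFI hNotMem using key
  set Λ : Subgroup Γ := ⨅ p : (Σ i : Fin h, Fin (m i)), H p.1 p.2 with hΛ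
  have hNormΛ : Λ.Normal := by
    constructor
    intro n hn g
    rw [hΛ, Subgroup.mem_iInf] at hn ⊢
    intro p
    exact (hNorm p.1 p.2).conj_mem n (hn p) g
  haveI : Λ.FiniteIndex := Subgroup.finiteIndex_iInf fun p => hFI p.1 p.2
  refine ⟨Λ, hNormΛ, inferInstance, fun i => ?_⟩
  rw [orderOf_eq_iff (hm i)]
  constructor
  · rw [← QuotientGroup.mk_pow, ← hord i, pow_orderOf_eq_one, QuotientGroup.mk_one]
  · intro k hk hk0 heq
    rw [← QuotientGroup.mk_pow, QuotientGroup.eq_one_iff] at heq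
    have := Subgroup.mem_iInf.mp heq ⟨i, ⟨k, hk⟩⟩
    exact hNotMem i ⟨k, hk⟩ hk0.ne' this
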